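/- Let C_i ⊆ H, i ∈ I := {1,…,M}, be closed and convex sets in a real Hilbert space H with C := ⋂_{i∈I} C_i ≠ ∅. Let T_k := Σ_{n=1}^{N_k} ω_n^k ∏_{j∈J_n^k} P_{C_j}, where each J_n^k ⊆ I is a string, ω_n^k ∈ (0,1) with Σ_n ω_n^k = 1 and ω_n^k ≥ ω > 0, m := sup_k max_n |J_n^k| < ∞, and there is s ≥ 1 such that I = I_k ∪ … ∪ I_{k+s−1} for all k, where I_k := J_1^k ∪ … ∪ J_{N_k}^k. Let {e_k} ⊆ [0,∞) be summable and let {x^k} ⊆ H satisfy ‖x^{k+1} − T_k x^k‖ ≤ e_k for all k. If the family {C_i : i ∈ I} is boundedly linearly regular, then there are κ > 0, c > 0, q ∈ (0,1) and x^∞ ∈ C such that for all integers k ≥ i ≥ 0: (1/(2κ)) ‖x^{k+1} − x^∞‖ − 2 Σ_{j=i}^{∞} e_j ≤ max_{j∈I} d(x^{k+1}, C_j) ≤ c q^{k−i} + 2 Σ_{j=i}^{∞} e_j. -/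

import Mathlib

open Metric Filter Topology

/-- `P` is the metric projection onto `C`. -/
def IsMetricProj {H : Type*} [NormedAddCommGroup H] (C : Set H) (P : H → H) : Prop :=
  ∀ x : H, P x ∈ C ∧ ∀ z ∈ C, ‖x - P x‖ ≤ ‖x - z‖

/-- For a string `J = (j_1, …, j_l)`, `stringProd P J = P j_l ∘ ⋯ ∘ P j_1`. -/
def stringProd {H : Type*} {M : ℕ} (P : Fin M → H → H) : List (Fin M) → H → H
  | [] => id
  | j :: J => fun x => stringProd P J (P j x)

/-!
Each projection is firmly nonexpansive, so one step of a string-averaging operator moves a point,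
and brings it close to every `C_j` it projects onto, by at most `√(2^m/ω)` times the square root
of the decrease of its squared distance to any point of `C`. Within `s` consecutive steps every
`C_j` is visited, so bounded linear regularity turns the decrease over such a block into a fixed
fraction of `d(·, C)²`: exact trajectories from a bounded set approach `C` at a uniform linear
rate. The perturbed sequence stays within the error tail `Σ_{j ≥ i} e_j` of the exact trajectory
started at `x^i`, and it is quasi-Fejér monotone with respect to `C`; so it converges to some
`x^∞ ∈ C` with `‖x^k - x^∞‖ ≤ 2 d(x^k, C) + Σ_{j ≥ i} e_j`, which together with regularity
gives the lower bound, while the linear rate gives the upper one.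
-/

namespace IsMetricProj

variable {H : Type*} [NormedAddCommGroup H] {C : Set H} {P : H → H}

theorem apply_eq_self (hP : IsMetricProj C P) {z : H} (hz : z ∈ C) : P z = z := by
  simpa [sub_eq_zero, eq_comm] using (hP z).2 z hz

variable [InnerProductSpace ℝ H]

theorem inner_sub_sub_nonpos (hP : IsMetricProj C P) (hC : Convex ℝ C) (u : H) {z : H}
    (hz : z ∈ C) : inner ℝ (u - P u) (z - P u) ≤ 0 := by
  have : Nonempty C := ⟨⟨P u, (hP u).1⟩⟩
  refine (norm_eq_iInf_iff_real_inner_le_zero hC (hP u).1).mp (le_antisymm ?_ ?_) z hz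
  · exact le_ciInf fun w => (hP u).2 w w.2
  · exact ciInf_le (f := fun w : C => ‖u - (w : H)‖)
      ⟨0, by rintro _ ⟨w, rfl⟩; exact norm_nonneg _⟩ ⟨P u, (hP u).1⟩

theorem norm_sub_sq_add_norm_sub_sq_le (hP : IsMetricProj C P) (hC : Convex ℝ C) (u : H)
    {z : H} (hz : z ∈ C) : ‖P u - z‖ ^ 2 + ‖u - P u‖ ^ 2 ≤ ‖u - z‖ ^ 2 := by
  have h := hP.inner_sub_sub_nonpos hC u hz
  rw [← neg_sub (P u) z, inner_neg_right] at h
  rw [show u - z = (u - P u) + (P u - z) by abel, norm_add_sq_real]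
  linarith

theorem lipschitzWith_one (hP : IsMetricProj C P) (hC : Convex ℝ C) : LipschitzWith 1 P := by
  refine LipschitzWith.of_dist_le_mul fun u v => ?_
  rw [NNReal.coe_one, one_mul, dist_eq_norm, dist_eq_norm]
  have hu := hP.inner_sub_sub_nonpos hC u (hP v).1
  have hv := hP.inner_sub_sub_nonpos hC v (hP u).1
  rw [← neg_sub (P u) (P v), inner_neg_right] at hu
  have hsq : ‖P u - P v‖ ^ 2 ≤ inner ℝ (u - v) (P u - P v) := by
    rw [show u - v = (u - P u) - (v - P v) + (P u - P v) by abel, inner_add_left,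
      inner_sub_left, real_inner_self_eq_norm_sq]
    linarith
  have hcs := real_inner_le_norm (u - v) (P u - P v)
  nlinarith [norm_nonneg (P u - P v), norm_nonneg (u - v)]

end IsMetricProj

section stringProd

variable {H : Type*} {M : ℕ}

theorem stringProd_append (P : Fin M → H → H) (A B : List (Fin M)) (u : H) :
    stringProd P (A ++ B) u = stringProd P B (stringProd P A u) := by
  induction A generalizing u with
  | nil => rfl
  | cons j A ih => exact ih (P j u)

variable [NormedAddCommGroup H] {Cset : Fin M → Set H} {P : Fin M → H → H}

theorem stringProd_eq_self (hP : ∀ i, IsMetricProj (Cset i) (P i)) (J : List (Fin M))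
    {z : H} (hz : z ∈ ⋂ i, Cset i) : stringProd P J z = z := by
  induction J with
  | nil => rfl
  | cons j J ih =>
    show stringProd P J (P j z) = z
    rw [(hP j).apply_eq_self (Set.mem_iInter.mp hz j), ih]

variable [InnerProductSpace ℝ H]

theorem lipschitzWith_one_stringProd (hC : ∀ i, Convex ℝ (Cset i))
    (hP : ∀ i, IsMetricProj (Cset i) (P i)) (J : List (Fin M)) :
    LipschitzWith 1 (stringProd P J) := by
  induction J with
  | nil => exact LipschitzWith.id
  | cons j J ih =>
    have h := ih.comp ((hP j).lipschitzWith_one (hC j))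
    rwa [mul_one] at h

theorem norm_stringProd_sub_le (hC : ∀ i, Convex ℝ (Cset i))
    (hP : ∀ i, IsMetricProj (Cset i) (P i)) (J : List (Fin M)) (u : H) {z : H}
    (hz : z ∈ ⋂ i, Cset i) : ‖stringProd P J u - z‖ ≤ ‖u - z‖ := by
  simpa [stringProd_eq_self hP J hz, dist_eq_norm] using
    (lipschitzWith_one_stringProd hC hP J).dist_le_mul u z

theorem norm_stringProd_sub_sq_le (hC : ∀ i, Convex ℝ (Cset i))
    (hP : ∀ i, IsMetricProj (Cset i) (P i)) (J : List (Fin M)) (u : H) {z : H}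
    (hz : z ∈ ⋂ i, Cset i) : ‖stringProd P J u - z‖ ^ 2 ≤ ‖u - z‖ ^ 2 :=
  pow_le_pow_left₀ (norm_nonneg _) (norm_stringProd_sub_le hC hP J u hz) 2

theorem norm_sub_stringProd_sq_le (hC : ∀ i, Convex ℝ (Cset i))
    (hP : ∀ i, IsMetricProj (Cset i) (P i)) (J : List (Fin M)) (u : H) {z : H}
    (hz : z ∈ ⋂ i, Cset i) :
    ‖u - stringProd P J u‖ ^ 2
      ≤ 2 ^ J.length * (‖u - z‖ ^ 2 - ‖stringProd P J u - z‖ ^ 2) := by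
  induction J generalizing u with
  | nil => simp [stringProd]
  | cons j J ih =>
    set v := P j u
    have hfirm := (hP j).norm_sub_sq_add_norm_sub_sq_le (hC j) u (Set.mem_iInter.mp hz j)
    have hrest := ih v
    have hquasi := norm_stringProd_sub_sq_le hC hP J v hz
    have htri : ‖u - stringProd P J v‖ ^ 2
        ≤ 2 * (‖u - v‖ ^ 2 + ‖v - stringProd P J v‖ ^ 2) := by
      refine le_trans ?_ (add_sq_le (a := ‖u - v‖) (b := ‖v - stringProd P J v‖))
      gcongr
      simpa using norm_sub_le_norm_sub_add_norm_sub u v (stringProd P J v)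
    have hpow : (1 : ℝ) ≤ 2 ^ J.length := one_le_pow₀ one_le_two
    show ‖u - stringProd P J v‖ ^ 2
      ≤ 2 ^ (J.length + 1) * (‖u - z‖ ^ 2 - ‖stringProd P J v - z‖ ^ 2)
    rw [pow_succ (2 : ℝ)]
    nlinarith [mul_le_mul_of_nonneg_right hpow (sq_nonneg ‖u - v‖)]

theorem infDist_sq_le_stringProd (hC : ∀ i, Convex ℝ (Cset i))
    (hP : ∀ i, IsMetricProj (Cset i) (P i)) {J : List (Fin M)} {j : Fin M} (hj : j ∈ J) (u : H)
    {z : H} (hz : z ∈ ⋂ i, Cset i) :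
    infDist u (Cset j) ^ 2
      ≤ 2 ^ J.length * (‖u - z‖ ^ 2 - ‖stringProd P J u - z‖ ^ 2) := by
  obtain ⟨A, B, rfl⟩ := List.append_of_mem hj
  set u₁ := stringProd P (A ++ [j]) u
  have hu₁ : u₁ ∈ Cset j := by
    simp only [u₁, stringProd_append]
    exact (hP j _).1
  have hinf : infDist u (Cset j) ≤ ‖u - u₁‖ := by
    simpa [dist_eq_norm] using infDist_le_dist_of_mem (x := u) hu₁
  have hmove := norm_sub_stringProd_sq_le hC hP (A ++ [j]) u hz
  have hrest : ‖stringProd P (A ++ j :: B) u - z‖ ^ 2 ≤ ‖u₁ - z‖ ^ 2 := by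
    rw [List.append_cons, stringProd_append]
    exact norm_stringProd_sub_sq_le hC hP B u₁ hz
  have hfirst := norm_stringProd_sub_sq_le hC hP (A ++ [j]) u hz
  have hlen : (2 : ℝ) ^ (A ++ [j]).length ≤ 2 ^ (A ++ j :: B).length :=
    pow_le_pow_right₀ one_le_two (by simp)
  calc infDist u (Cset j) ^ 2 ≤ ‖u - u₁‖ ^ 2 := by gcongr; exact infDist_nonneg
    _ ≤ 2 ^ (A ++ [j]).length * (‖u - z‖ ^ 2 - ‖u₁ - z‖ ^ 2) := hmove
    _ ≤ 2 ^ (A ++ j :: B).length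
          * (‖u - z‖ ^ 2 - ‖stringProd P (A ++ j :: B) u - z‖ ^ 2) := by
      gcongr

end stringProd

def stringAvg {H : Type*} [AddCommGroup H] [Module ℝ H] {M N : ℕ} (P : Fin M → H → H)
    (J : Fin N → List (Fin M)) (w : Fin N → ℝ) (u : H) : H :=
  ∑ n, w n • stringProd P (J n) u

section stringAvg

variable {H : Type*} [NormedAddCommGroup H] {M N : ℕ} {Cset : Fin M → Set H}
  {P : Fin M → H → H} {J : Fin N → List (Fin M)} {w : Fin N → ℝ}

theorem stringAvg_sub [Module ℝ H] (hw1 : ∑ n, w n = 1) (u v : H) :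
    stringAvg P J w u - v = ∑ n, w n • (stringProd P (J n) u - v) := by
  simp only [stringAvg, smul_sub, Finset.sum_sub_distrib, ← Finset.sum_smul, hw1, one_smul]

theorem stringAvg_eq_self [Module ℝ H] (hP : ∀ i, IsMetricProj (Cset i) (P i))
    (hw1 : ∑ n, w n = 1) {z : H} (hz : z ∈ ⋂ i, Cset i) : stringAvg P J w z = z := by
  simp only [stringAvg, stringProd_eq_self hP _ hz, ← Finset.sum_smul, hw1, one_smul]

variable [InnerProductSpace ℝ H]

theorem lipschitzWith_one_stringAvg (hC : ∀ i, Convex ℝ (Cset i))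
    (hP : ∀ i, IsMetricProj (Cset i) (P i)) (hw0 : ∀ n, 0 ≤ w n) (hw1 : ∑ n, w n = 1) :
    LipschitzWith 1 (stringAvg P J w) := by
  refine LipschitzWith.of_dist_le_mul fun u v => ?_
  rw [NNReal.coe_one, one_mul, dist_eq_norm, dist_eq_norm]
  calc ‖stringAvg P J w u - stringAvg P J w v‖
      = ‖∑ n, w n • (stringProd P (J n) u - stringProd P (J n) v)‖ := by
        simp only [stringAvg, smul_sub, Finset.sum_sub_distrib]
    _ ≤ ∑ n, w n * ‖u - v‖ := by
        refine (norm_sum_le _ _).trans (Finset.sum_le_sum fun n _ => ?_)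
        rw [norm_smul, Real.norm_of_nonneg (hw0 n)]
        refine mul_le_mul_of_nonneg_left ?_ (hw0 n)
        simpa [dist_eq_norm] using (lipschitzWith_one_stringProd hC hP (J n)).dist_le_mul u v
    _ = ‖u - v‖ := by rw [← Finset.sum_mul, hw1, one_mul]

theorem dist_stringAvg_le (hC : ∀ i, Convex ℝ (Cset i))
    (hP : ∀ i, IsMetricProj (Cset i) (P i)) (hw0 : ∀ n, 0 ≤ w n) (hw1 : ∑ n, w n = 1) (u : H)
    {z : H} (hz : z ∈ ⋂ i, Cset i) :
    dist (stringAvg P J w u) z ≤ dist u z := by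
  simpa [stringAvg_eq_self hP hw1 hz] using
    (lipschitzWith_one_stringAvg hC hP hw0 hw1).dist_le_mul u z

theorem norm_stringAvg_sub_sq_le (hw0 : ∀ n, 0 ≤ w n) (hw1 : ∑ n, w n = 1) (u z : H) :
    ‖stringAvg P J w u - z‖ ^ 2 ≤ ∑ n, w n * ‖stringProd P (J n) u - z‖ ^ 2 := by
  rw [stringAvg_sub hw1]
  simpa using (convexOn_univ_norm.pow (fun _ _ => norm_nonneg _) 2).map_sum_le
    (t := Finset.univ) (fun n _ => hw0 n) hw1 (fun _ _ => Set.mem_univ _)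

theorem mul_sub_norm_stringProd_sq_le (hC : ∀ i, Convex ℝ (Cset i))
    (hP : ∀ i, IsMetricProj (Cset i) (P i)) (hw0 : ∀ n, 0 ≤ w n) (hw1 : ∑ n, w n = 1)
    {ω : ℝ} {n : Fin N} (hωn : ω ≤ w n) (u : H) {z : H} (hz : z ∈ ⋂ i, Cset i) :
    ω * (‖u - z‖ ^ 2 - ‖stringProd P (J n) u - z‖ ^ 2)
      ≤ ‖u - z‖ ^ 2 - ‖stringAvg P J w u - z‖ ^ 2 := by
  have hdecr : ∀ k, 0 ≤ ‖u - z‖ ^ 2 - ‖stringProd P (J k) u - z‖ ^ 2 := fun k =>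
    sub_nonneg.2 (norm_stringProd_sub_sq_le hC hP (J k) u hz)
  calc ω * (‖u - z‖ ^ 2 - ‖stringProd P (J n) u - z‖ ^ 2)
      ≤ w n * (‖u - z‖ ^ 2 - ‖stringProd P (J n) u - z‖ ^ 2) := by gcongr; exact hdecr n
    _ ≤ ∑ k, w k * (‖u - z‖ ^ 2 - ‖stringProd P (J k) u - z‖ ^ 2) :=
        Finset.single_le_sum (fun k _ => mul_nonneg (hw0 k) (hdecr k)) (Finset.mem_univ n)
    _ = ‖u - z‖ ^ 2 - ∑ k, w k * ‖stringProd P (J k) u - z‖ ^ 2 := by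
        simp only [mul_sub, Finset.sum_sub_distrib, ← Finset.sum_mul, hw1, one_mul]
    _ ≤ ‖u - z‖ ^ 2 - ‖stringAvg P J w u - z‖ ^ 2 := by
        linarith [norm_stringAvg_sub_sq_le (P := P) (J := J) hw0 hw1 u z]

theorem two_pow_length_mul_sub_le (hC : ∀ i, Convex ℝ (Cset i))
    (hP : ∀ i, IsMetricProj (Cset i) (P i)) (hw0 : ∀ n, 0 ≤ w n) (hw1 : ∑ n, w n = 1)
    {ω : ℝ} (hω : 0 < ω) {m : ℕ} {n : Fin N} (hωn : ω ≤ w n) (hm : (J n).length ≤ m)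
    (u : H) {z : H} (hz : z ∈ ⋂ i, Cset i) :
    2 ^ (J n).length * (‖u - z‖ ^ 2 - ‖stringProd P (J n) u - z‖ ^ 2)
      ≤ 2 ^ m / ω * (‖u - z‖ ^ 2 - ‖stringAvg P J w u - z‖ ^ 2) := by
  have hdecr : 0 ≤ ‖u - z‖ ^ 2 - ‖stringProd P (J n) u - z‖ ^ 2 :=
    sub_nonneg.2 (norm_stringProd_sub_sq_le hC hP (J n) u hz)
  have h := mul_sub_norm_stringProd_sq_le (J := J) hC hP hw0 hw1 hωn u hz
  rw [div_mul_eq_mul_div, le_div_iff₀ hω, mul_assoc]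
  calc 2 ^ (J n).length * ((‖u - z‖ ^ 2 - ‖stringProd P (J n) u - z‖ ^ 2) * ω)
      ≤ 2 ^ m * (ω * (‖u - z‖ ^ 2 - ‖stringProd P (J n) u - z‖ ^ 2)) := by
        rw [mul_comm _ ω]; gcongr; norm_num
    _ ≤ 2 ^ m * (‖u - z‖ ^ 2 - ‖stringAvg P J w u - z‖ ^ 2) := by gcongr

theorem infDist_sq_le_stringAvg (hC : ∀ i, Convex ℝ (Cset i))
    (hP : ∀ i, IsMetricProj (Cset i) (P i)) (hw0 : ∀ n, 0 ≤ w n) (hw1 : ∑ n, w n = 1)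
    {ω : ℝ} (hω : 0 < ω) (hwω : ∀ n, ω ≤ w n) {m : ℕ} (hm : ∀ n, (J n).length ≤ m)
    (u : H) {z : H} (hz : z ∈ ⋂ i, Cset i) {j : Fin M} (hj : ∃ n, j ∈ J n) :
    infDist u (Cset j) ^ 2 ≤ 2 ^ m / ω * (dist u z ^ 2 - dist (stringAvg P J w u) z ^ 2) := by
  obtain ⟨n, hjn⟩ := hj
  rw [dist_eq_norm, dist_eq_norm]
  exact (infDist_sq_le_stringProd hC hP hjn u hz).trans
    (two_pow_length_mul_sub_le hC hP hw0 hw1 hω (hwω n) (hm n) u hz)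

theorem dist_stringAvg_sq_le (hC : ∀ i, Convex ℝ (Cset i))
    (hP : ∀ i, IsMetricProj (Cset i) (P i)) (hw0 : ∀ n, 0 ≤ w n) (hw1 : ∑ n, w n = 1)
    {ω : ℝ} (hω : 0 < ω) (hwω : ∀ n, ω ≤ w n) {m : ℕ} (hm : ∀ n, (J n).length ≤ m)
    (u : H) {z : H} (hz : z ∈ ⋂ i, Cset i) :
    dist u (stringAvg P J w u) ^ 2
      ≤ 2 ^ m / ω * (dist u z ^ 2 - dist (stringAvg P J w u) z ^ 2) := by
  rw [dist_comm, dist_eq_norm, dist_eq_norm, dist_eq_norm]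
  calc ‖stringAvg P J w u - u‖ ^ 2 ≤ ∑ n, w n * ‖stringProd P (J n) u - u‖ ^ 2 :=
        norm_stringAvg_sub_sq_le hw0 hw1 u u
    _ ≤ ∑ n, w n * (2 ^ m / ω * (‖u - z‖ ^ 2 - ‖stringAvg P J w u - z‖ ^ 2)) := by
        refine Finset.sum_le_sum fun n _ => mul_le_mul_of_nonneg_left ?_ (hw0 n)
        rw [norm_sub_rev]
        exact (norm_sub_stringProd_sq_le hC hP (J n) u hz).trans
          (two_pow_length_mul_sub_le hC hP hw0 hw1 hω (hwω n) (hm n) u hz)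
    _ = 2 ^ m / ω * (‖u - z‖ ^ 2 - ‖stringAvg P J w u - z‖ ^ 2) := by
        rw [← Finset.sum_mul, hw1, one_mul]

end stringAvg

section trajectory

variable {X : Type*}

def trajectory (T : ℕ → X → X) (k₀ : ℕ) (u : X) : ℕ → X
  | 0 => u
  | n + 1 => T (k₀ + n) (trajectory T k₀ u n)

theorem trajectory_add (T : ℕ → X → X) (k₀ : ℕ) (u : X) (n p : ℕ) :
    trajectory T k₀ u (n + p) = trajectory T (k₀ + n) (trajectory T k₀ u n) p := by
  induction p with
  | zero => rfl
  | succ p ih =>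
    show T (k₀ + (n + p)) (trajectory T k₀ u (n + p)) = T (k₀ + n + p) _
    rw [ih, add_assoc]

variable [PseudoMetricSpace X] {T : ℕ → X → X} {C : Set X}

theorem dist_trajectory_le (hT : ∀ k u, ∀ z ∈ C, dist (T k u) z ≤ dist u z) (k₀ : ℕ)
    (u : X) {z : X} (hz : z ∈ C) (n : ℕ) : dist (trajectory T k₀ u n) z ≤ dist u z := by
  induction n with
  | zero => exact le_rfl
  | succ n ih => exact (hT _ _ z hz).trans ih

theorem antitone_infDist_trajectory (hT : ∀ k u, ∀ z ∈ C, dist (T k u) z ≤ dist u z)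
    (hC : C.Nonempty) (k₀ : ℕ) (u : X) : Antitone fun n => infDist (trajectory T k₀ u n) C :=
  antitone_nat_of_succ_le fun _ =>
    (le_infDist hC).2 fun z hz => (infDist_le_dist_of_mem hz).trans (hT _ _ z hz)

theorem dist_trajectory_le_sum (hT : ∀ k, LipschitzWith 1 (T k)) {x : ℕ → X} {e : ℕ → ℝ}
    (hx : ∀ k, dist (x (k + 1)) (T k (x k)) ≤ e k) (i n : ℕ) :
    dist (x (i + n)) (trajectory T i (x i) n) ≤ ∑ t ∈ Finset.range n, e (i + t) := by
  induction n with
  | zero => simp [trajectory]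
  | succ n ih =>
    have hlip : dist (T (i + n) (x (i + n))) (T (i + n) (trajectory T i (x i) n))
        ≤ dist (x (i + n)) (trajectory T i (x i) n) := by
      simpa using (hT (i + n)).dist_le_mul (x (i + n)) (trajectory T i (x i) n)
    rw [Finset.sum_range_succ, add_comm (∑ t ∈ Finset.range n, e (i + t))]
    exact (dist_triangle _ _ _).trans (add_le_add (hx (i + n)) (hlip.trans ih))

end trajectory

section metric

variable {X : Type*} [PseudoMetricSpace X]

theorem le_infDist_sq {S : Set X} {x : X} {r : ℝ} (hS : S.Nonempty)
    (h : ∀ z ∈ S, r ≤ dist x z ^ 2) : r ≤ infDist x S ^ 2 :=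
  (Real.sqrt_le_iff.1 ((le_infDist hS).2 fun z hz =>
    Real.sqrt_le_iff.2 ⟨dist_nonneg, h z hz⟩)).2

theorem infDist_le_mul_of_dist_succ_le {v : ℕ → X} {S : Set X} {R : ℝ} {t s : ℕ}
    (hts : t < s) (hstep : ∀ r < t, dist (v r) (v (r + 1)) ≤ R) (ht : infDist (v t) S ≤ R) :
    infDist (v 0) S ≤ s * R := by
  have hR : 0 ≤ R := infDist_nonneg.trans ht
  have hpath : dist (v 0) (v t) ≤ t * R := by
    refine (dist_le_range_sum_dist v t).trans ?_
    simpa using Finset.sum_le_sum fun r hr => hstep r (Finset.mem_range.1 hr)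
  have hts' : (t : ℝ) + 1 ≤ s := by exact_mod_cast hts
  calc infDist (v 0) S ≤ infDist (v t) S + dist (v 0) (v t) := infDist_le_infDist_add_dist
    _ ≤ R + t * R := add_le_add ht hpath
    _ ≤ s * R := by nlinarith

theorem infDist_le_sqrt_mul_of_forall {S : Set X} {x y : X} {G : ℝ} (hG : 0 < G)
    (hS : S.Nonempty) (h : ∀ z ∈ S, infDist x S ^ 2 ≤ G * (dist x z ^ 2 - dist y z ^ 2)) :
    infDist y S ≤ √(G / (G + 1)) * infDist x S := by
  have hsum : infDist y S ^ 2 + infDist x S ^ 2 / G ≤ infDist x S ^ 2 :=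
    le_infDist_sq hS fun z hz => by
      have hy : infDist y S ^ 2 ≤ dist y z ^ 2 := by
        gcongr
        · exact infDist_nonneg
        · exact infDist_le_dist_of_mem hz
      have hx : infDist x S ^ 2 / G ≤ dist x z ^ 2 - dist y z ^ 2 := by
        rw [div_le_iff₀' hG]; exact h z hz
      linarith
  have hsq : infDist y S ^ 2 ≤ G / (G + 1) * infDist x S ^ 2 := by
    rw [div_mul_eq_mul_div, le_div_iff₀ (by linarith)]
    have hfrac : 0 ≤ infDist x S ^ 2 / G := by positivity
    have hmul : infDist x S ^ 2 / G * G = infDist x S ^ 2 := div_mul_cancel₀ _ hG.ne'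
    nlinarith
  calc infDist y S = √(infDist y S ^ 2) := (Real.sqrt_sq infDist_nonneg).symm
    _ ≤ √(G / (G + 1) * infDist x S ^ 2) := Real.sqrt_le_sqrt hsq
    _ = √(G / (G + 1)) * infDist x S := by
      rw [Real.sqrt_mul' _ (sq_nonneg _), Real.sqrt_sq infDist_nonneg]

theorem iSup_infDist_le_infDist_iInter {ι : Type*} {S : ι → Set X} (hS : (⋂ j, S j).Nonempty)
    (y : X) : ⨆ j, infDist y (S j) ≤ infDist y (⋂ j, S j) :=
  Real.iSup_le (fun j => infDist_le_infDist_of_subset (Set.iInter_subset _ j) hS) infDist_nonneg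

end metric

section rate

variable {X : Type*} [PseudoMetricSpace X] {T : ℕ → X → X} {C : Set X} {e : ℕ → ℝ}
  {x : ℕ → X}

theorem infDist_trajectory_le_of_cover {ι : Type*} {S : ι → Set X} {I : ℕ → Set ι}
    {B κ : ℝ} {k₀ s : ℕ} (hB : 0 < B) (hκ : 0 < κ) (hs : 0 < s) (hC : C.Nonempty)
    (hdist : ∀ k u, ∀ z ∈ C, ∀ j ∈ I k,
      infDist u (S j) ^ 2 ≤ B * (dist u z ^ 2 - dist (T k u) z ^ 2))
    (hstep : ∀ k u, ∀ z ∈ C, dist u (T k u) ^ 2 ≤ B * (dist u z ^ 2 - dist (T k u) z ^ 2))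
    (hcov : ∀ j, ∃ l, k₀ ≤ l ∧ l < k₀ + s ∧ j ∈ I l) {u : X}
    (hreg : infDist u C ≤ κ * ⨆ j, infDist u (S j)) :
    infDist (trajectory T k₀ u s) C
      ≤ √((κ * s) ^ 2 * B / ((κ * s) ^ 2 * B + 1)) * infDist u C := by
  refine infDist_le_sqrt_mul_of_forall (by positivity) hC fun z hz => ?_
  set v := trajectory T k₀ u
  set D := dist u z ^ 2 - dist (v s) z ^ 2
  have hdecr : ∀ t, 0 ≤ dist (v t) z ^ 2 - dist (v (t + 1)) z ^ 2 := fun t =>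
    (mul_nonneg_iff_of_pos_left hB).1 ((sq_nonneg _).trans (hstep _ _ z hz))
  have htelescope : ∑ t ∈ Finset.range s, (dist (v t) z ^ 2 - dist (v (t + 1)) z ^ 2) = D :=
    Finset.sum_range_sub' (fun t => dist (v t) z ^ 2) s
  have hD : 0 ≤ D := htelescope ▸ Finset.sum_nonneg fun t _ => hdecr t
  -- every one-step decrease is at most the decrease `D` over the whole block
  have hR : ∀ t < s, ∀ a, 0 ≤ a →
      a ^ 2 ≤ B * (dist (v t) z ^ 2 - dist (v (t + 1)) z ^ 2) → a ≤ √(B * D) := by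
    intro t ht a ha h
    refine (Real.le_sqrt ha (by positivity)).2 (h.trans ?_)
    gcongr
    exact htelescope ▸ Finset.single_le_sum (fun t _ => hdecr t) (Finset.mem_range.2 ht)
  have hsup : ⨆ j, infDist u (S j) ≤ s * √(B * D) := by
    refine Real.iSup_le (fun j => ?_) (by positivity)
    obtain ⟨l, hl₁, hl₂, hj⟩ := hcov j
    obtain ⟨t, rfl⟩ := Nat.exists_eq_add_of_le hl₁
    exact infDist_le_mul_of_dist_succ_le (v := v) (by omega)
      (fun r hr => hR r (by omega) _ dist_nonneg (hstep _ _ z hz))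
      (hR t (by omega) _ infDist_nonneg (hdist _ _ z hz j hj))
  calc infDist u C ^ 2 ≤ (κ * (s * √(B * D))) ^ 2 := by
        gcongr
        · exact infDist_nonneg
        · exact hreg.trans (by gcongr)
    _ = (κ * s) ^ 2 * B * D := by
        rw [mul_pow, mul_pow, Real.sq_sqrt (by positivity)]; ring

theorem le_div_pow_mul_pow_of_antitone {a : ℕ → ℝ} (ha : Antitone a) (ha0 : 0 ≤ a 0)
    {q : ℝ} (hq0 : 0 < q) (hq1 : q ≤ 1) {s : ℕ} (hs : 0 < s) (hblock : ∀ n, a (n + s) ≤ q ^ s * a n)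
    (n : ℕ) : a n ≤ a 0 / q ^ s * q ^ n := by
  have hmul : ∀ r, a (s * r) ≤ q ^ (s * r) * a 0 := by
    intro r
    induction r with
    | zero => simp
    | succ r ih =>
      calc a (s * (r + 1)) = a (s * r + s) := by rw [mul_add_one]
        _ ≤ q ^ s * a (s * r) := hblock _
        _ ≤ q ^ s * (q ^ (s * r) * a 0) := by gcongr
        _ = q ^ (s * (r + 1)) * a 0 := by ring
  have hexp : q ^ (s * (n / s)) * q ^ s ≤ q ^ n := by
    rw [← pow_add]
    refine pow_le_pow_of_le_one hq0.le hq1 ?_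
    have := Nat.lt_mul_div_succ n hs
    rw [mul_add_one] at this
    omega
  calc a n ≤ a (s * (n / s)) := ha (Nat.mul_div_le n s)
    _ ≤ q ^ (s * (n / s)) * a 0 := hmul _
    _ ≤ a 0 / q ^ s * q ^ n := by
      rw [div_mul_eq_mul_div, le_div_iff₀ (by positivity)]
      nlinarith [mul_le_mul_of_nonneg_left hexp ha0]

theorem exists_infDist_trajectory_le_pow (hT : ∀ k u, ∀ z ∈ C, dist (T k u) z ≤ dist u z)
    {z₀ : X} (hz₀ : z₀ ∈ C) {r ρ : ℝ} (hρ : ρ < 1) {s : ℕ} (hs : 0 < s)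
    (hblock : ∀ k₀, ∀ u ∈ closedBall z₀ r,
      infDist (trajectory T k₀ u s) C ≤ ρ * infDist u C) :
    ∃ q, 0 < q ∧ q < 1 ∧ ∀ k₀, ∀ u ∈ closedBall z₀ r, ∀ n,
      infDist (trajectory T k₀ u n) C ≤ infDist u C / q ^ s * q ^ n := by
  -- `q ^ s = max ρ (1/2)`; the maximum keeps `q` positive
  set θ := max ρ 2⁻¹
  have hθ0 : 0 < θ := lt_max_of_lt_right (by norm_num)
  have hθ1 : θ < 1 := max_lt hρ (by norm_num)
  have hqs : (θ ^ (s : ℝ)⁻¹) ^ s = θ := Real.rpow_inv_natCast_pow hθ0.le hs.ne'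
  refine ⟨θ ^ (s : ℝ)⁻¹, by positivity, Real.rpow_lt_one hθ0.le hθ1 (by positivity),
    fun k₀ u hu n => ?_⟩
  refine le_div_pow_mul_pow_of_antitone (antitone_infDist_trajectory hT ⟨z₀, hz₀⟩ k₀ u)
    infDist_nonneg (by positivity) (Real.rpow_le_one hθ0.le hθ1.le (by positivity)) hs
    (fun n => ?_) n
  have hun : trajectory T k₀ u n ∈ closedBall z₀ r :=
    mem_closedBall.2 ((dist_trajectory_le hT k₀ u hz₀ n).trans (mem_closedBall.1 hu))
  rw [trajectory_add, hqs]
  exact (hblock _ _ hun).trans (by gcongr; exacts [infDist_nonneg, le_max_left _ _])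

theorem dist_le_add_tsum_of_perturbed (hlip : ∀ k, LipschitzWith 1 (T k))
    (hquasi : ∀ k u, ∀ z ∈ C, dist (T k u) z ≤ dist u z) (he : ∀ k, 0 ≤ e k)
    (hesum : Summable e) (hx : ∀ k, dist (x (k + 1)) (T k (x k)) ≤ e k) {z : X} (hz : z ∈ C)
    (k p : ℕ) : dist (x (k + p)) z ≤ dist (x k) z + ∑' j, e (k + j) :=
  calc dist (x (k + p)) z
      ≤ dist (x (k + p)) (trajectory T k (x k) p) + dist (trajectory T k (x k) p) z :=
        dist_triangle _ _ _
    _ ≤ ∑' j, e (k + j) + dist (x k) z := add_le_add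
        ((dist_trajectory_le_sum hlip hx k p).trans
          ((hesum.comp_injective (add_right_injective k)).sum_le_tsum _ fun _ _ => he _))
        (dist_trajectory_le hquasi k (x k) hz p)
    _ = dist (x k) z + ∑' j, e (k + j) := add_comm _ _

end rate

theorem antitone_tsum_nat_add {f : ℕ → ℝ} (hf : ∀ n, 0 ≤ f n) (hs : Summable f) :
    Antitone fun i => ∑' j, f (i + j) := by
  refine antitone_nat_of_succ_le fun i => ?_
  have hsum : Summable fun j => f (i + j) := hs.comp_injective (add_right_injective i)
  have hshift : ∑' j, f (i + (j + 1)) = ∑' j, f (i + 1 + j) :=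
    tsum_congr fun j => congrArg f (by omega)
  rw [hsum.tsum_eq_zero_add, add_zero, hshift]
  linarith [hf i]

theorem tendsto_zero_of_le_mul_pow_add {a E : ℕ → ℝ} {c q : ℝ} (ha : ∀ k, 0 ≤ a k)
    (hq0 : 0 ≤ q) (hq1 : q < 1) (hE : Tendsto E atTop (𝓝 0))
    (h : ∀ i n, a (i + n) ≤ c * q ^ n + E i) : Tendsto a atTop (𝓝 0) := by
  have hhalf : Tendsto (fun k => k / 2) atTop atTop := Nat.tendsto_div_const_atTop two_ne_zero
  have hrest : Tendsto (fun k => k - k / 2) atTop atTop :=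
    tendsto_atTop_mono (fun k => by omega) hhalf
  have hbound : Tendsto (fun k => c * q ^ (k - k / 2) + E (k / 2)) atTop (𝓝 0) := by
    simpa using (((tendsto_pow_atTop_nhds_zero_of_lt_one hq0 hq1).comp hrest).const_mul c).add
      (hE.comp hhalf)
  refine squeeze_zero ha (fun k => ?_) hbound
  have := h (k / 2) (k - k / 2)
  rwa [Nat.add_sub_cancel' (Nat.div_le_self k 2)] at this

section convergence

variable {X : Type*} [MetricSpace X] [CompleteSpace X] {C : Set X}

theorem exists_mem_dist_le_of_quasiFejer (hC : IsClosed C) (hCne : C.Nonempty) {x : ℕ → X}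
    {E : ℕ → ℝ} (hE : Tendsto E atTop (𝓝 0))
    (hfejer : ∀ z ∈ C, ∀ k p, dist (x (k + p)) z ≤ dist (x k) z + E k)
    (hd : Tendsto (fun k => infDist (x k) C) atTop (𝓝 0)) :
    ∃ xlim ∈ C, ∀ k, dist (x k) xlim ≤ 2 * infDist (x k) C + E k := by
  have hstay : ∀ k p, dist (x (k + p)) (x k) ≤ 2 * infDist (x k) C + E k := by
    intro k p
    have : (dist (x (k + p)) (x k) - E k) / 2 ≤ infDist (x k) C :=
      (le_infDist hCne).2 fun z hz => by
        rw [div_le_iff₀ two_pos]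
        linarith [hfejer z hz k p, dist_triangle_right (x (k + p)) (x k) z]
    linarith
  have hcauchy : CauchySeq x := by
    refine cauchySeq_of_le_tendsto_0 (fun N => 2 * (2 * infDist (x N) C + E N))
      (fun n p N hn hp => ?_) (by simpa using ((hd.const_mul 2).add hE).const_mul 2)
    obtain ⟨a, rfl⟩ := Nat.exists_eq_add_of_le hn
    obtain ⟨b, rfl⟩ := Nat.exists_eq_add_of_le hp
    linarith [dist_triangle_right (x (N + a)) (x (N + b)) (x N), hstay N a, hstay N b]
  obtain ⟨xlim, hlim⟩ := cauchySeq_tendsto_of_complete hcauchy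
  refine ⟨xlim, ?_, fun k => ?_⟩
  · rw [hC.mem_iff_infDist_zero hCne]
    exact tendsto_nhds_unique (((continuous_infDist_pt C).tendsto xlim).comp hlim) hd
  · have hshift : Tendsto (fun p => dist (x (p + k)) (x k)) atTop (𝓝 (dist xlim (x k))) :=
      (hlim.comp (tendsto_add_atTop_nat k)).dist tendsto_const_nhds
    rw [dist_comm]
    exact le_of_tendsto' hshift fun p => add_comm p k ▸ hstay k p

variable {T : ℕ → X → X} {e : ℕ → ℝ} {x : ℕ → X}

theorem exists_limit_of_perturbed (hC : IsClosed C) (hCne : C.Nonempty)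
    (hlip : ∀ k, LipschitzWith 1 (T k))
    (hquasi : ∀ k u, ∀ z ∈ C, dist (T k u) z ≤ dist u z) (he : ∀ k, 0 ≤ e k)
    (hesum : Summable e) (hx : ∀ k, dist (x (k + 1)) (T k (x k)) ≤ e k)
    {c q : ℝ} (hq0 : 0 ≤ q) (hq1 : q < 1)
    (hrate : ∀ i n, infDist (trajectory T i (x i) n) C ≤ c * q ^ n) :
    ∃ xlim ∈ C, ∀ i n,
      dist (x (i + n)) xlim ≤ 2 * infDist (x (i + n)) C + ∑' j, e (i + j) ∧
        infDist (x (i + n)) C ≤ c * q ^ n + ∑' j, e (i + j) := by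
  have hupper : ∀ i n, infDist (x (i + n)) C ≤ c * q ^ n + ∑' j, e (i + j) := fun i n =>
    infDist_le_infDist_add_dist.trans (add_le_add (hrate i n)
      ((dist_trajectory_le_sum hlip hx i n).trans
        ((hesum.comp_injective (add_right_injective i)).sum_le_tsum _ fun _ _ => he _)))
  have htail : Tendsto (fun i => ∑' j, e (i + j)) atTop (𝓝 0) := by
    simpa only [add_comm] using tendsto_sum_nat_add e
  obtain ⟨xlim, hxlim, hdist⟩ := exists_mem_dist_le_of_quasiFejer hC hCne htail
    (fun z hz => dist_le_add_tsum_of_perturbed hlip hquasi he hesum hx hz)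
    (tendsto_zero_of_le_mul_pow_add (fun _ => infDist_nonneg) hq0 hq1 htail hupper)
  exact ⟨xlim, hxlim, fun i n => ⟨(hdist _).trans
    (add_le_add le_rfl (antitone_tsum_nat_add he hesum (Nat.le_add_right i n))), hupper i n⟩⟩

end convergence

theorem exists_infDist_trajectory_stringAvg_le_pow {H : Type*} [NormedAddCommGroup H]
    [InnerProductSpace ℝ H] {M : ℕ} {Cset : Fin M → Set H} {P : Fin M → H → H}
    {N : ℕ → ℕ} {J : (k : ℕ) → Fin (N k) → List (Fin M)} {w : (k : ℕ) → Fin (N k) → ℝ}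
    (hC : ∀ i, Convex ℝ (Cset i)) (hP : ∀ i, IsMetricProj (Cset i) (P i))
    (hw0 : ∀ k n, 0 ≤ w k n) (hws : ∀ k, ∑ n, w k n = 1) {ω : ℝ} (hω : 0 < ω)
    (hwω : ∀ k n, ω ≤ w k n) {m : ℕ} (hm : ∀ k n, (J k n).length ≤ m) {s : ℕ}
    (hs : 0 < s) (hcover : ∀ k, ∀ i : Fin M, ∃ l, k ≤ l ∧ l < k + s ∧ ∃ n, i ∈ J l n)
    {z₀ : H} (hz₀ : z₀ ∈ ⋂ i, Cset i) {r κ : ℝ} (hκ : 0 < κ)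
    (hreg : ∀ y ∈ closedBall z₀ r,
      infDist y (⋂ i, Cset i) ≤ κ * ⨆ j, infDist y (Cset j)) :
    ∃ q, 0 < q ∧ q < 1 ∧ ∀ k₀, ∀ u ∈ closedBall z₀ r, ∀ n,
      infDist (trajectory (fun k => stringAvg P (J k) (w k)) k₀ u n) (⋂ i, Cset i)
        ≤ infDist u (⋂ i, Cset i) / q ^ s * q ^ n := by
  set G := (κ * s) ^ 2 * (2 ^ m / ω)
  have hρ : √(G / (G + 1)) < 1 :=
    (Real.sqrt_lt' one_pos).2 (by rw [one_pow, div_lt_one (by positivity)]; linarith)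
  refine exists_infDist_trajectory_le_pow
    (fun k u z hz => dist_stringAvg_le hC hP (hw0 k) (hws k) u hz) hz₀ hρ hs
    fun k₀ u hu => infDist_trajectory_le_of_cover (I := fun k => {j | ∃ n, j ∈ J k n})
      (by positivity) hκ hs ⟨z₀, hz₀⟩
      (fun k u z hz j hj =>
        infDist_sq_le_stringAvg hC hP (hw0 k) (hws k) hω (hwω k) (hm k) u hz hj)
      (fun k u z hz => dist_stringAvg_sq_le hC hP (hw0 k) (hws k) hω (hwω k) (hm k) u hz)
      (hcover k₀) (hreg u hu)

theorem exists_limit_stringAvg_perturbed {H : Type*} [NormedAddCommGroup H]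
    [InnerProductSpace ℝ H] [CompleteSpace H] {M : ℕ} {Cset : Fin M → Set H}
    {P : Fin M → H → H} {N : ℕ → ℕ} {J : (k : ℕ) → Fin (N k) → List (Fin M)}
    {w : (k : ℕ) → Fin (N k) → ℝ} (hCcl : ∀ i, IsClosed (Cset i)) (hC : ∀ i, Convex ℝ (Cset i))
    (hP : ∀ i, IsMetricProj (Cset i) (P i)) (hw0 : ∀ k n, 0 ≤ w k n)
    (hws : ∀ k, ∑ n, w k n = 1) {ω : ℝ} (hω : 0 < ω) (hwω : ∀ k n, ω ≤ w k n) {m : ℕ}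
    (hm : ∀ k n, (J k n).length ≤ m) {s : ℕ} (hs : 0 < s)
    (hcover : ∀ k, ∀ i : Fin M, ∃ l, k ≤ l ∧ l < k + s ∧ ∃ n, i ∈ J l n) {e : ℕ → ℝ}
    (he : ∀ k, 0 ≤ e k) (hesum : Summable e) {x : ℕ → H}
    (hx : ∀ k, dist (x (k + 1)) (stringAvg P (J k) (w k) (x k)) ≤ e k) {z₀ : H}
    (hz₀ : z₀ ∈ ⋂ i, Cset i) {κ : ℝ} (hκ : 0 < κ)
    (hreg : ∀ y ∈ closedBall z₀ (dist (x 0) z₀ + ∑' j, e j),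
      infDist y (⋂ i, Cset i) ≤ κ * ⨆ j, infDist y (Cset j)) :
    ∃ c > (0 : ℝ), ∃ q : ℝ, 0 < q ∧ q < 1 ∧ ∃ xlim ∈ ⋂ i, Cset i, ∀ i n,
      dist (x (i + n)) xlim
          ≤ 2 * κ * (⨆ j, infDist (x (i + n)) (Cset j)) + ∑' j, e (i + j) ∧
        ⨆ j, infDist (x (i + n)) (Cset j) ≤ c * q ^ n + ∑' j, e (i + j) := by
  set r := dist (x 0) z₀ + ∑' j, e j
  have hr : 0 ≤ r := add_nonneg dist_nonneg (tsum_nonneg he)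
  have hlip : ∀ k, LipschitzWith 1 (stringAvg P (J k) (w k)) := fun k =>
    lipschitzWith_one_stringAvg hC hP (hw0 k) (hws k)
  have hquasi : ∀ k u, ∀ z ∈ ⋂ i, Cset i, dist (stringAvg P (J k) (w k) u) z ≤ dist u z :=
    fun k u _ hz => dist_stringAvg_le hC hP (hw0 k) (hws k) u hz
  have hball : ∀ k, x k ∈ closedBall z₀ r := fun k => by
    simpa using dist_le_add_tsum_of_perturbed hlip hquasi he hesum hx hz₀ 0 k
  obtain ⟨q, hq0, hq1, hrate⟩ := exists_infDist_trajectory_stringAvg_le_pow hC hP hw0 hws hω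
    hwω hm hs hcover hz₀ hκ hreg
  obtain ⟨xlim, hxlim, hconv⟩ := exists_limit_of_perturbed (isClosed_iInter hCcl) ⟨z₀, hz₀⟩
    hlip hquasi he hesum hx hq0.le hq1 (c := (r + 1) / q ^ s) fun i n =>
      (hrate i (x i) (hball i) n).trans (by
        gcongr
        exact ((infDist_le_dist_of_mem hz₀).trans (mem_closedBall.1 (hball i))).trans
          (by linarith))
  refine ⟨(r + 1) / q ^ s, by positivity, q, hq0, hq1, xlim, hxlim, fun i n => ⟨?_, ?_⟩⟩
  · rw [mul_assoc]
    linarith [(hconv i n).1, hreg _ (hball (i + n))]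
  · exact (iSup_infDist_le_infDist_iInter ⟨z₀, hz₀⟩ _).trans (hconv i n).2

theorem stmt18_general {H : Type*} [NormedAddCommGroup H] [InnerProductSpace ℝ H] [CompleteSpace H]
    {M : ℕ}
    (Cset : Fin M → Set H) (hCcl : ∀ i, IsClosed (Cset i)) (hCcv : ∀ i, Convex ℝ (Cset i))
    (hCne : (⋂ i, Cset i).Nonempty)
    (P : Fin M → H → H) (hP : ∀ i, IsMetricProj (Cset i) (P i))
    (N : ℕ → ℕ) (J : (k : ℕ) → Fin (N k) → List (Fin M)) (w : (k : ℕ) → Fin (N k) → ℝ)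
    (hw : ∀ k n, w k n ∈ Set.Ioo (0 : ℝ) 1) (hws : ∀ k, ∑ n, w k n = 1)
    (ω : ℝ) (hω : 0 < ω) (hwω : ∀ k n, ω ≤ w k n)
    (m : ℕ) (hm : ∀ k n, (J k n).length ≤ m)
    (s : ℕ) (hs : 1 ≤ s)
    (hcover : ∀ k, ∀ i : Fin M, ∃ l, k ≤ l ∧ l < k + s ∧ ∃ n, i ∈ J l n)
    (T : ℕ → H → H) (hT : ∀ k y, T k y = ∑ n, w k n • stringProd P (J k n) y)
    (e : ℕ → ℝ) (he : ∀ k, 0 ≤ e k) (hesum : Summable e)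
    (x : ℕ → H) (hx : ∀ k, ‖x (k + 1) - T k (x k)‖ ≤ e k)
    (hblr : ∀ S : Set H, Bornology.IsBounded S → ∃ κS > (0 : ℝ),
      ∀ y ∈ S, infDist y (⋂ i, Cset i) ≤ κS * ⨆ j, infDist y (Cset j)) :
    ∃ κ > (0 : ℝ), ∃ c > (0 : ℝ), ∃ q : ℝ, 0 < q ∧ q < 1 ∧
      ∃ xlim ∈ ⋂ i, Cset i, ∀ i k : ℕ, i ≤ k →
        1 / (2 * κ) * ‖x (k + 1) - xlim‖ - 2 * ∑' j, e (i + j) ≤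
            (⨆ j, infDist (x (k + 1)) (Cset j)) ∧
          (⨆ j, infDist (x (k + 1)) (Cset j)) ≤ c * q ^ (k - i) + 2 * ∑' j, e (i + j) := by
  obtain ⟨z₀, hz₀⟩ := hCne
  obtain rfl : T = fun k => stringAvg P (J k) (w k) := funext fun k => funext (hT k)
  obtain ⟨κ₀, -, hreg⟩ := hblr _ (isBounded_closedBall (x := z₀) (r := dist (x 0) z₀ + ∑' j, e j))
  set κ := max κ₀ 1
  have hκ1 : 1 ≤ κ := le_max_right _ _
  obtain ⟨c, hc, q, hq0, hq1, xlim, hxlim, hbounds⟩ := exists_limit_stringAvg_perturbed hCcl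
    hCcv hP (fun k n => (hw k n).1.le) hws hω hwω hm hs hcover he hesum
    (fun k => (dist_eq_norm _ _).trans_le (hx k)) hz₀ (κ := κ) (by positivity) fun y hy =>
      (hreg y hy).trans (mul_le_mul_of_nonneg_right (le_max_left κ₀ 1)
        (Real.iSup_nonneg fun _ => infDist_nonneg))
  refine ⟨κ, by positivity, c, hc, q, hq0, hq1, xlim, hxlim, fun i k hik => ?_⟩
  obtain ⟨hlow, hup⟩ := hbounds i (k - i + 1)
  rw [show i + (k - i + 1) = k + 1 by omega] at hlow hup
  rw [dist_eq_norm] at hlow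
  have hE : 0 ≤ ∑' j, e (i + j) := tsum_nonneg fun j => he (i + j)
  constructor
  · rw [div_mul_eq_mul_div, one_mul, sub_le_iff_le_add, div_le_iff₀ (by positivity)]
    nlinarith [mul_le_mul_of_nonneg_right hκ1 hE]
  · have hpow : q ^ (k - i + 1) ≤ q ^ (k - i) := pow_le_pow_of_le_one hq0.le hq1.le (by omega)
    nlinarith [mul_le_mul_of_nonneg_left hpow hc.le]

/-- Perturbation resilience of the dynamic string averaging projection method with
boundedly linearly regular constraint sets: there are `κ > 0`, `c > 0`, `q ∈ (0,1)` and
`x^∞ ∈ C` such that for all `k ≥ i ≥ 0`,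
`(1/(2κ))‖x^{k+1} − x^∞‖ − 2Σ_{j=i}^∞ e_j ≤ max_{j∈I} d(x^{k+1}, C_j)
≤ c q^{k−i} + 2Σ_{j=i}^∞ e_j`. -/
theorem stmt18 {H : Type*} [NormedAddCommGroup H] [InnerProductSpace ℝ H] [CompleteSpace H]
    {M : ℕ} [NeZero M]
    (Cset : Fin M → Set H) (hCcl : ∀ i, IsClosed (Cset i)) (hCcv : ∀ i, Convex ℝ (Cset i))
    (hCne : (⋂ i, Cset i).Nonempty)
    (P : Fin M → H → H) (hP : ∀ i, IsMetricProj (Cset i) (P i))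
    (N : ℕ → ℕ) (J : (k : ℕ) → Fin (N k) → List (Fin M)) (w : (k : ℕ) → Fin (N k) → ℝ)
    (hw : ∀ k n, w k n ∈ Set.Ioo (0 : ℝ) 1) (hws : ∀ k, ∑ n, w k n = 1)
    (ω : ℝ) (hω : 0 < ω) (hwω : ∀ k n, ω ≤ w k n)
    (m : ℕ) (hm : ∀ k n, (J k n).length ≤ m)
    (s : ℕ) (hs : 1 ≤ s)
    (hcover : ∀ k, ∀ i : Fin M, ∃ l, k ≤ l ∧ l < k + s ∧ ∃ n, i ∈ J l n)
    (T : ℕ → H → H) (hT : ∀ k y, T k y = ∑ n, w k n • stringProd P (J k n) y)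
    (e : ℕ → ℝ) (he : ∀ k, 0 ≤ e k) (hesum : Summable e)
    (x : ℕ → H) (hx : ∀ k, ‖x (k + 1) - T k (x k)‖ ≤ e k)
    (hblr : ∀ S : Set H, Bornology.IsBounded S → ∃ κS > (0 : ℝ),
      ∀ y ∈ S, infDist y (⋂ i, Cset i) ≤ κS * ⨆ j, infDist y (Cset j)) :
    ∃ κ > (0 : ℝ), ∃ c > (0 : ℝ), ∃ q : ℝ, 0 < q ∧ q < 1 ∧
      ∃ xlim ∈ ⋂ i, Cset i, ∀ i k : ℕ, i ≤ k →
        1 / (2 * κ) * ‖x (k + 1) - xlim‖ - 2 * ∑' j, e (i + j) ≤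
            (⨆ j, infDist (x (k + 1)) (Cset j)) ∧
          (⨆ j, infDist (x (k + 1)) (Cset j)) ≤ c * q ^ (k - i) + 2 * ∑' j, e (i + j) :=
  stmt18_general Cset hCcl hCcv hCne P hP N J w hw hws ω hω hwω m hm s hs hcover T hT e he hesum x
    hx hblr
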